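/- For every n ≥ 2, the descending staircase E_n is brodable. -/

import Mathlib

/-!
Walk down the staircase cell by cell. In the cell `(k, -k)` stitch the inferior diagonal from
`(k+1, 1-k)` to `(k, -k)`, step up to `(k, 1-k)`, stitch the superior diagonal down to `(k+1, -k)`,
and step right to `(k+2, -k)`, which is where the inferior diagonal of the next cell starts.
-/

/-- Two vertices of `ℤ²` are adjacent if their Euclidean distance is `1`. -/
def Adj (u v : ℤ × ℤ) : Prop := (u.1 - v.1) ^ 2 + (u.2 - v.2) ^ 2 = 1

/-- The inferior diagonal of the cell `(a, b)`: the unordered pair `{(a,b), (a+1,b+1)}`. -/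
def infDiag (c : ℤ × ℤ) : Sym2 (ℤ × ℤ) := s(c, (c.1 + 1, c.2 + 1))

/-- The superior diagonal of the cell `(a, b)`: the unordered pair `{(a,b+1), (a+1,b)}`. -/
def supDiag (c : ℤ × ℤ) : Sym2 (ℤ × ℤ) := s((c.1, c.2 + 1), (c.1 + 1, c.2))

/-- The unordered pair underlying an ordered pair of vertices. -/
def diagOf (e : (ℤ × ℤ) × (ℤ × ℤ)) : Sym2 (ℤ × ℤ) := s(e.1, e.2)

/-- `d 0, d 1, …, d (2n - 1)` (with `n = C.card`) is an embroidery of the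
configuration `C`. -/
def IsEmbroidery (C : Finset (ℤ × ℤ)) (d : ℕ → (ℤ × ℤ) × (ℤ × ℤ)) : Prop :=
  (∀ i < 2 * C.card, ∃ c ∈ C, diagOf (d i) = infDiag c ∨ diagOf (d i) = supDiag c) ∧
  (∀ c ∈ C, ∃! i, i < 2 * C.card ∧ diagOf (d i) = infDiag c) ∧
  (∀ c ∈ C, ∃! i, i < 2 * C.card ∧ diagOf (d i) = supDiag c) ∧
  (∀ c ∈ C, ∀ i j, i < 2 * C.card → j < 2 * C.card →
    diagOf (d i) = infDiag c → diagOf (d j) = supDiag c → i < j) ∧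
  (∀ i, i + 1 < 2 * C.card → Adj (d i).2 (d (i + 1)).1)

/-- A closed embroidery: moreover the end of the last diagonal is adjacent to the
start of the first one. -/
def IsClosedEmbroidery (C : Finset (ℤ × ℤ)) (d : ℕ → (ℤ × ℤ) × (ℤ × ℤ)) : Prop :=
  IsEmbroidery C d ∧ Adj (d (2 * C.card - 1)).2 (d 0).1

/-- A configuration is brodable if it admits an embroidery. -/
def Brodable (C : Finset (ℤ × ℤ)) : Prop := ∃ d, IsEmbroidery C d

/-- A configuration is strongly brodable if it admits a closed embroidery. -/
def StronglyBrodable (C : Finset (ℤ × ℤ)) : Prop := ∃ d, IsClosedEmbroidery C d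

/-- The descending staircase `E_n = {(i, -i) : 0 ≤ i < n}`. -/
def staircase (n : ℕ) : Finset (ℤ × ℤ) :=
  (Finset.range n).image (fun i : ℕ => ((i : ℤ), -(i : ℤ)))

theorem infDiag_injective : Function.Injective infDiag := by
  intro c c' h
  simp only [infDiag, Sym2.eq_iff, Prod.ext_iff] at h
  ext <;> omega

theorem supDiag_injective : Function.Injective supDiag := by
  intro c c' h
  simp only [supDiag, Sym2.eq_iff, Prod.ext_iff] at h
  ext <;> omega

theorem infDiag_ne_supDiag (c c' : ℤ × ℤ) : infDiag c ≠ supDiag c' := by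
  intro h
  simp only [infDiag, supDiag, Sym2.eq_iff, Prod.ext_iff] at h
  omega

section Cellwise

variable {cell : ℕ → ℤ × ℤ} {n : ℕ} {d : ℕ → (ℤ × ℤ) × (ℤ × ℤ)}
  (hinf : ∀ k < n, diagOf (d (2 * k)) = infDiag (cell k))
  (hsup : ∀ k < n, diagOf (d (2 * k + 1)) = supDiag (cell k))
include hinf hsup

theorem eq_two_mul_of_diagOf_eq_infDiag (hcell : Function.Injective cell) {i k : ℕ}
    (hi : i < 2 * n) (h : diagOf (d i) = infDiag (cell k)) : i = 2 * k := by
  obtain ⟨m, rfl | rfl⟩ := Nat.even_or_odd' i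
  · rw [hinf m (by omega)] at h
    rw [hcell (infDiag_injective h)]
  · rw [hsup m (by omega)] at h
    exact absurd h.symm (infDiag_ne_supDiag _ _)

theorem eq_two_mul_add_one_of_diagOf_eq_supDiag (hcell : Function.Injective cell) {i k : ℕ}
    (hi : i < 2 * n) (h : diagOf (d i) = supDiag (cell k)) : i = 2 * k + 1 := by
  obtain ⟨m, rfl | rfl⟩ := Nat.even_or_odd' i
  · rw [hinf m (by omega)] at h
    exact absurd h (infDiag_ne_supDiag _ _)
  · rw [hsup m (by omega)] at h
    rw [hcell (supDiag_injective h)]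

theorem isEmbroidery_image_range (hcell : Function.Injective cell)
    (hadj : ∀ i, i + 1 < 2 * n → Adj (d i).2 (d (i + 1)).1) :
    IsEmbroidery ((Finset.range n).image cell) d := by
  have hcard : ((Finset.range n).image cell).card = n := by
    rw [Finset.card_image_of_injective _ hcell, Finset.card_range]
  simp only [IsEmbroidery, hcard, Finset.forall_mem_image, Finset.exists_mem_image,
    Finset.mem_range]
  refine ⟨fun i hi => ?_, fun k hk => ⟨2 * k, ⟨by omega, hinf k hk⟩, ?_⟩,
    fun k hk => ⟨2 * k + 1, ⟨by omega, hsup k hk⟩, ?_⟩, fun k _ i j hi hj hi' hj' => ?_, hadj⟩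
  · obtain ⟨m, rfl | rfl⟩ := Nat.even_or_odd' i
    · exact ⟨m, by omega, .inl (hinf m (by omega))⟩
    · exact ⟨m, by omega, .inr (hsup m (by omega))⟩
  · exact fun i ⟨hi, h⟩ => eq_two_mul_of_diagOf_eq_infDiag hinf hsup hcell hi h
  · exact fun i ⟨hi, h⟩ => eq_two_mul_add_one_of_diagOf_eq_supDiag hinf hsup hcell hi h
  · rw [eq_two_mul_of_diagOf_eq_infDiag hinf hsup hcell hi hi',
      eq_two_mul_add_one_of_diagOf_eq_supDiag hinf hsup hcell hj hj']
    omega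

end Cellwise

def staircaseStitch (i : ℕ) : (ℤ × ℤ) × (ℤ × ℤ) :=
  let k : ℤ := (i / 2 : ℕ)
  if i % 2 = 0 then ((k + 1, 1 - k), (k, -k)) else ((k, 1 - k), (k + 1, -k))

theorem staircaseStitch_two_mul (k : ℕ) :
    staircaseStitch (2 * k) = (((k : ℤ) + 1, 1 - (k : ℤ)), ((k : ℤ), -(k : ℤ))) := by
  simp [staircaseStitch]

theorem staircaseStitch_two_mul_add_one (k : ℕ) :
    staircaseStitch (2 * k + 1) = (((k : ℤ), 1 - (k : ℤ)), ((k : ℤ) + 1, -(k : ℤ))) := by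
  simp [staircaseStitch]
  omega

theorem diagOf_staircaseStitch_two_mul (k : ℕ) :
    diagOf (staircaseStitch (2 * k)) = infDiag ((k : ℤ), -(k : ℤ)) := by
  rw [staircaseStitch_two_mul, diagOf, infDiag, Sym2.eq_swap]
  congr 2
  ext <;> simp only [sub_eq_neg_add]

theorem diagOf_staircaseStitch_two_mul_add_one (k : ℕ) :
    diagOf (staircaseStitch (2 * k + 1)) = supDiag ((k : ℤ), -(k : ℤ)) := by
  rw [staircaseStitch_two_mul_add_one, diagOf, supDiag]
  congr 2
  ext <;> simp only [sub_eq_neg_add]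

theorem adj_staircaseStitch (i : ℕ) : Adj (staircaseStitch i).2 (staircaseStitch (i + 1)).1 := by
  obtain ⟨k, rfl | rfl⟩ := Nat.even_or_odd' i
  · rw [staircaseStitch_two_mul, staircaseStitch_two_mul_add_one, Adj]
    ring
  · rw [show 2 * k + 1 + 1 = 2 * (k + 1) by ring, staircaseStitch_two_mul,
      staircaseStitch_two_mul_add_one, Adj]
    push_cast
    ring

theorem staircase_brodable_general (n : ℕ) : Brodable (staircase n) :=
  ⟨staircaseStitch, isEmbroidery_image_range (fun k _ => diagOf_staircaseStitch_two_mul k)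
    (fun k _ => diagOf_staircaseStitch_two_mul_add_one k)
    (fun a b h => by simpa using congrArg Prod.fst h) (fun i _ => adj_staircaseStitch i)⟩

/-- For every `n ≥ 2`, the descending staircase `E_n` is brodable. -/
theorem staircase_brodable (n : ℕ) (hn : 2 ≤ n) : Brodable (staircase n) :=
  staircase_brodable_general n
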